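/- arXiv:1706.08952 — 2 statements merged into one kernel-verified Lean document; each statement's English description precedes it below -/
import Mathlib

section
/- (Sonine's first finite integral) For complex numbers μ, ν with Re(μ) > -1 and Re(ν) > -1, and for every t > 0, one has J_{μ+ν+1}(t) = (t^{ν+1} / (2^ν Γ(ν+1))) · ∫_0^1 J_μ(st) s^{μ+1} (1-s²)^ν ds. -/
open Complex Real

/-- Bessel function of the first kind of order `ν`, defined by its power series. -/
noncomputable def besselJ (ν : ℂ) (t : ℝ) : ℂ :=
  ∑' n : ℕ, ((-1) ^ n / ((n.factorial : ℂ) * Complex.Gamma ((n : ℂ) + ν + 1))) *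
    (((t : ℂ) / 2) ^ ((2 * (n : ℂ)) + ν))

/-!
Expand `J_μ(st)` in its power series and integrate term by term. The `n`-th term of `J_μ(st)` is
`s^(2n+μ)` times the `n`-th term of `J_μ(t)`, so the `n`-th integral is that term times
`∫₀¹ s^(2n+2μ+1) (1-s²)^ν ds = B(n+μ+1, ν+1)/2`, and `B(n+μ+1, ν+1) = Γ(n+μ+1) Γ(ν+1) / Γ(n+μ+ν+2)`
turns it into the `n`-th term of `J_{μ+ν+1}(t)` divided by `t^(ν+1) / (2^ν Γ(ν+1))`.
Termwise integration is justified since the `n`-th integral of absolute values is at most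
`|n-th term of J_μ(t)| · ∫₀¹ s^(2 Re μ+1) (1-s²)^(Re ν) ds`, and the series of `J_μ(t)` converges
absolutely by the ratio test.
-/

open MeasureTheory Set Filter Topology

noncomputable def besselJTerm (ν : ℂ) (t : ℝ) (n : ℕ) : ℂ :=
  (-1) ^ n / ((n.factorial : ℂ) * Gamma ((n : ℂ) + ν + 1)) * ((t : ℂ) / 2) ^ (2 * (n : ℂ) + ν)

lemma besselJ_eq_tsum (ν : ℂ) (t : ℝ) : besselJ ν t = ∑' n, besselJTerm ν t n := rfl

lemma besselJTerm_succ {ν : ℂ} {t : ℝ} (ht : t ≠ 0) {n : ℕ} (hn : (n : ℂ) + ν + 1 ≠ 0) :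
    besselJTerm ν t (n + 1) =
      besselJTerm ν t n * (-((t : ℂ) / 2) ^ 2 / (((n : ℂ) + 1) * ((n : ℂ) + ν + 1))) := by
  have ht2 : (t : ℂ) / 2 ≠ 0 := div_ne_zero (ofReal_ne_zero.mpr ht) two_ne_zero
  have hGamma : Gamma ((n : ℂ) + 1 + ν + 1) = ((n : ℂ) + ν + 1) * Gamma ((n : ℂ) + ν + 1) := by
    rw [← Gamma_add_one _ hn]; ring_nf
  have hpow : ((t : ℂ) / 2) ^ (2 * ((n : ℂ) + 1) + ν) =
      ((t : ℂ) / 2) ^ (2 * (n : ℂ) + ν) * ((t : ℂ) / 2) ^ 2 := by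
    rw [← cpow_ofNat, ← cpow_add _ _ ht2]; ring_nf
  by_cases hG : Gamma ((n : ℂ) + ν + 1) = 0
  · simp [besselJTerm, hGamma, hG]
  simp only [besselJTerm, Nat.factorial_succ, pow_succ, Nat.cast_succ, hGamma, hpow]
  push_cast
  field_simp

lemma summable_norm_besselJTerm (ν : ℂ) {t : ℝ} (ht : t ≠ 0) :
    Summable fun n => ‖besselJTerm ν t n‖ := by
  have hnorm (c : ℂ) : Tendsto (fun n : ℕ => ‖(n : ℂ) + c‖) atTop atTop :=
    tendsto_norm_cobounded_atTop.comp <|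
      (tendsto_add_const_cobounded c).comp tendsto_natCast_atTop_cobounded
  set q : ℕ → ℝ := fun n => ‖((t : ℂ) / 2) ^ 2‖ / (((n : ℝ) + 1) * ‖(n : ℂ) + (ν + 1)‖)
  have hq : Tendsto q atTop (𝓝 0) :=
    tendsto_const_nhds.div_atTop <| (tendsto_atTop_add_const_right _ 1
      tendsto_natCast_atTop_atTop).atTop_mul_atTop₀ (hnorm _)
  have hne : ∀ᶠ n : ℕ in atTop, (n : ℂ) + ν + 1 ≠ 0 := by
    filter_upwards [(hnorm (ν + 1)).eventually_gt_atTop 0] with n hn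
    rw [add_assoc]; exact norm_pos_iff.mp hn
  refine summable_of_ratio_norm_eventually_le (r := 1 / 2) (by norm_num) ?_
  filter_upwards [hq.eventually_le_const (by norm_num : (0 : ℝ) < 1 / 2), hne] with n hqn hn
  rw [norm_norm, norm_norm, besselJTerm_succ ht hn, norm_mul, mul_comm (1 / 2 : ℝ)]
  refine mul_le_mul_of_nonneg_left (le_trans (le_of_eq ?_) hqn) (norm_nonneg _)
  simp only [q, norm_div, norm_neg, norm_mul, add_assoc]
  norm_cast

lemma image_sq_Ioo_zero_one : (fun x : ℝ => x ^ 2) '' Ioo 0 1 = Ioo 0 1 := by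
  ext u
  constructor
  · rintro ⟨x, ⟨hx0, hx1⟩, rfl⟩
    exact ⟨by positivity, pow_lt_one₀ hx0.le hx1 two_ne_zero⟩
  · rintro ⟨hu0, hu1⟩
    exact ⟨√u, ⟨Real.sqrt_pos.mpr hu0, (Real.sqrt_lt' one_pos).mpr (by simpa using hu1)⟩,
      Real.sq_sqrt hu0.le⟩

lemma injOn_sq_Ioo_zero_one : InjOn (fun x : ℝ => x ^ 2) (Ioo 0 1) :=
  (pow_left_strictMonoOn₀ two_ne_zero).injOn.mono fun _ hx => le_of_lt hx.1

lemma hasDerivWithinAt_sq_Ioo_zero_one :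
    ∀ x ∈ Ioo (0 : ℝ) 1, HasDerivWithinAt (fun y : ℝ => y ^ 2) (2 * x) (Ioo 0 1) x :=
  fun x _ => by simpa using (hasDerivAt_pow 2 x).hasDerivWithinAt

section SquareSubstitution

variable {E : Type*} [NormedAddCommGroup E] [NormedSpace ℝ E]

lemma eqOn_abs_two_mul_smul_comp_sq (g : ℝ → E) :
    EqOn (fun x => |2 * x| • g (x ^ 2)) (fun x => (2 * x) • g (x ^ 2)) (Ioo 0 1) :=
  fun x hx => by simp only [abs_of_pos (by linarith [hx.1] : (0 : ℝ) < 2 * x)]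

lemma integral_Ioo_zero_one_eq_integral_comp_sq (g : ℝ → E) :
    ∫ u in Ioo 0 1, g u = ∫ x in Ioo 0 1, (2 * x) • g (x ^ 2) := by
  nth_rewrite 1 [← image_sq_Ioo_zero_one]
  rw [integral_image_eq_integral_abs_deriv_smul measurableSet_Ioo
    hasDerivWithinAt_sq_Ioo_zero_one injOn_sq_Ioo_zero_one]
  exact setIntegral_congr_fun measurableSet_Ioo (eqOn_abs_two_mul_smul_comp_sq g)

lemma integrableOn_Ioo_zero_one_iff_comp_sq (g : ℝ → E) :
    IntegrableOn g (Ioo 0 1) ↔ IntegrableOn (fun x => (2 * x) • g (x ^ 2)) (Ioo 0 1) := by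
  nth_rewrite 1 [← image_sq_Ioo_zero_one]
  rw [integrableOn_image_iff_integrableOn_abs_deriv_smul
    measurableSet_Ioo hasDerivWithinAt_sq_Ioo_zero_one injOn_sq_Ioo_zero_one]
  exact integrableOn_congr_fun (eqOn_abs_two_mul_smul_comp_sq g) measurableSet_Ioo

end SquareSubstitution

/-- The integrand of `betaIntegral a b` after the substitution `u = s²`, without the factor 2. -/
noncomputable def betaIntegrandSq (a b : ℂ) (s : ℝ) : ℂ :=
  (s : ℂ) ^ (2 * a - 1) * ((1 - s ^ 2 : ℝ) : ℂ) ^ (b - 1)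

lemma two_mul_smul_betaIntegrand_comp_sq (a b : ℂ) {s : ℝ} (hs : 0 < s) :
    (2 * s) • (((s ^ 2 : ℝ) : ℂ) ^ (a - 1) * (1 - ((s ^ 2 : ℝ) : ℂ)) ^ (b - 1)) =
      2 * betaIntegrandSq a b s := by
  have hs' : (s : ℂ) ≠ 0 := ofReal_ne_zero.mpr hs.ne'
  have hsq : ((s ^ 2 : ℝ) : ℂ) ^ (a - 1) = (s : ℂ) ^ (2 * a - 1) / s := by
    rw [sq, ofReal_mul, mul_cpow_ofReal_nonneg hs.le hs.le, eq_div_iff hs',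
      show 2 * a - 1 = a - 1 + (a - 1) + 1 by ring, cpow_add _ _ hs', cpow_add _ _ hs', cpow_one]
  rw [real_smul, hsq, betaIntegrandSq]
  push_cast
  field_simp

lemma integrableOn_betaIntegrandSq {a b : ℂ} (ha : 0 < a.re) (hb : 0 < b.re) :
    IntegrableOn (betaIntegrandSq a b) (Ioo 0 1) := by
  have h := (integrableOn_Ioo_zero_one_iff_comp_sq _).mp
    ((betaIntegral_convergent ha hb).1.mono_set Ioo_subset_Ioc_self)
  have h2 : IntegrableOn (fun s => 2 * betaIntegrandSq a b s) (Ioo 0 1) :=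
    h.congr_fun (fun s hs => two_mul_smul_betaIntegrand_comp_sq a b hs.1) measurableSet_Ioo
  refine IntegrableOn.congr_fun (h2.const_mul 2⁻¹) (fun s _ => ?_) measurableSet_Ioo
  simp

lemma integral_betaIntegrandSq (a b : ℂ) :
    ∫ s in Ioo 0 1, betaIntegrandSq a b s = betaIntegral a b / 2 := by
  have h : betaIntegral a b = ∫ s in Ioo 0 1, 2 * betaIntegrandSq a b s := by
    rw [betaIntegral, intervalIntegral.integral_of_le zero_le_one, integral_Ioc_eq_integral_Ioo,
      integral_Ioo_zero_one_eq_integral_comp_sq]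
    exact setIntegral_congr_fun measurableSet_Ioo fun s hs =>
      two_mul_smul_betaIntegrand_comp_sq a b hs.1
  rw [h, integral_const_mul]
  ring

lemma norm_betaIntegrandSq_add_natCast_le (a b : ℂ) (n : ℕ) {s : ℝ} (hs : s ∈ Ioo 0 1) :
    ‖betaIntegrandSq (a + n) b s‖ ≤ ‖betaIntegrandSq a b s‖ := by
  have h : betaIntegrandSq (a + n) b s = (s : ℂ) ^ (2 * n) * betaIntegrandSq a b s := by
    rw [betaIntegrandSq, betaIntegrandSq, show 2 * (a + n) - 1 = 2 * a - 1 + ((2 * n : ℕ) : ℂ) by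
      push_cast; ring, cpow_add _ _ (ofReal_ne_zero.mpr hs.1.ne'), cpow_natCast]
    ring
  rw [h, norm_mul, norm_pow, norm_real, Real.norm_of_nonneg hs.1.le]
  exact mul_le_of_le_one_left (norm_nonneg _) (pow_le_one₀ hs.1.le hs.2.le)

lemma besselJTerm_mul_of_nonneg (ν : ℂ) (n : ℕ) {s t : ℝ} (hs : 0 ≤ s) (ht : 0 ≤ t) :
    besselJTerm ν (s * t) n = (s : ℂ) ^ (2 * (n : ℂ) + ν) * besselJTerm ν t n := by
  have h : ((s * t : ℝ) : ℂ) / 2 = (s : ℂ) * ((t / 2 : ℝ) : ℂ) := by push_cast; ring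
  rw [besselJTerm, besselJTerm, h, mul_cpow_ofReal_nonneg hs (by positivity)]
  push_cast
  ring

lemma besselJTerm_mul_mul_cpow_eq_betaIntegrandSq (μ ν : ℂ) (n : ℕ) {s t : ℝ} (hs : 0 < s)
    (ht : 0 ≤ t) :
    besselJTerm μ (s * t) n * (s : ℂ) ^ (μ + 1) * ((1 - s ^ 2 : ℝ) : ℂ) ^ ν =
      besselJTerm μ t n * betaIntegrandSq (μ + 1 + n) (ν + 1) s := by
  rw [besselJTerm_mul_of_nonneg μ n hs.le ht, betaIntegrandSq,
    show 2 * (μ + 1 + n) - 1 = 2 * (n : ℂ) + μ + (μ + 1) by ring,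
    cpow_add (2 * (n : ℂ) + μ) (μ + 1) (ofReal_ne_zero.mpr hs.ne'), add_sub_cancel_right]
  ring

lemma hasSum_integral_besselJ_mul (μ ν : ℂ) (hμ : -1 < μ.re) (hν : -1 < ν.re) {t : ℝ}
    (ht : 0 < t) :
    HasSum (fun n : ℕ => besselJTerm μ t n * (betaIntegral (μ + 1 + n) (ν + 1) / 2))
      (∫ s in Ioo 0 1, besselJ μ (s * t) * (s : ℂ) ^ (μ + 1) * ((1 - s ^ 2 : ℝ) : ℂ) ^ ν) := by
  set F : ℕ → ℝ → ℂ := fun n s =>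
    besselJTerm μ (s * t) n * (s : ℂ) ^ (μ + 1) * ((1 - s ^ 2 : ℝ) : ℂ) ^ ν
  have hF (n : ℕ) : EqOn (F n)
      (fun s => besselJTerm μ t n * betaIntegrandSq (μ + 1 + n) (ν + 1) s) (Ioo 0 1) :=
    fun s hs => besselJTerm_mul_mul_cpow_eq_betaIntegrandSq μ ν n hs.1 ht.le
  have hμ1 : 0 < (μ + 1).re := by simp only [add_re, one_re]; linarith
  have hν1 : 0 < (ν + 1).re := by simp only [add_re, one_re]; linarith
  have hμn (n : ℕ) : 0 < (μ + 1 + n).re := by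
    simp only [add_re, natCast_re, one_re]; linarith [n.cast_nonneg (α := ℝ)]
  have hint (n : ℕ) : IntegrableOn (F n) (Ioo 0 1) :=
    IntegrableOn.congr_fun ((integrableOn_betaIntegrandSq (hμn n) hν1).const_mul _) (hF n).symm
      measurableSet_Ioo
  set C := ∫ s in Ioo 0 1, ‖betaIntegrandSq (μ + 1) (ν + 1) s‖
  have hbound (n : ℕ) : ∫ s in Ioo 0 1, ‖F n s‖ ≤ ‖besselJTerm μ t n‖ * C := by
    rw [← integral_const_mul]
    refine setIntegral_mono_on (hint n).norm
      ((integrableOn_betaIntegrandSq hμ1 hν1).norm.const_mul _) measurableSet_Ioo fun s hs => ?_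
    rw [hF n hs, norm_mul]
    exact mul_le_mul_of_nonneg_left (norm_betaIntegrandSq_add_natCast_le _ _ n hs) (norm_nonneg _)
  have hsum : Summable fun n => ∫ s in Ioo 0 1, ‖F n s‖ :=
    .of_nonneg_of_le (fun n => integral_nonneg fun s => norm_nonneg _) hbound
      ((summable_norm_besselJTerm μ ht.ne').mul_right C)
  have hterm (n : ℕ) : ∫ s in Ioo 0 1, F n s =
      besselJTerm μ t n * (betaIntegral (μ + 1 + n) (ν + 1) / 2) := by
    rw [setIntegral_congr_fun measurableSet_Ioo (hF n), integral_const_mul,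
      integral_betaIntegrandSq]
  have htsum (s : ℝ) : ∑' n, F n s =
      besselJ μ (s * t) * (s : ℂ) ^ (μ + 1) * ((1 - s ^ 2 : ℝ) : ℂ) ^ ν := by
    simp only [F, tsum_mul_right, besselJ_eq_tsum]
  simpa only [hterm, htsum] using hasSum_integral_of_summable_integral_norm hint hsum

lemma besselJTerm_add_add_one (μ ν : ℂ) (hμ : -1 < μ.re) (hν : -1 < ν.re) {t : ℝ} (ht : 0 < t)
    (n : ℕ) :
    besselJTerm (μ + ν + 1) t n = (t : ℂ) ^ (ν + 1) / (2 ^ ν * Gamma (ν + 1)) *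
      (besselJTerm μ t n * (betaIntegral (μ + 1 + n) (ν + 1) / 2)) := by
  have hμn : 0 < ((n : ℂ) + μ + 1).re := by
    simp only [add_re, natCast_re, one_re]; linarith [n.cast_nonneg (α := ℝ)]
  have hν1 : 0 < (ν + 1).re := by simp only [add_re, one_re]; linarith
  have hμνn : Gamma ((n : ℂ) + (μ + ν + 1) + 1) ≠ 0 := Gamma_ne_zero_of_re_pos <| by
    simp only [add_re, natCast_re, one_re]; linarith [n.cast_nonneg (α := ℝ)]
  have hbeta : betaIntegral (μ + 1 + n) (ν + 1) =
      Gamma ((n : ℂ) + μ + 1) * Gamma (ν + 1) / Gamma ((n : ℂ) + (μ + ν + 1) + 1) := by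
    rw [show μ + 1 + n = (n : ℂ) + μ + 1 by ring, Gamma_mul_Gamma_eq_betaIntegral hμn hν1,
      show (n : ℂ) + μ + 1 + (ν + 1) = (n : ℂ) + (μ + ν + 1) + 1 by ring,
      mul_div_cancel_left₀ _ hμνn]
  have htwo : (t : ℂ) / 2 = ((t : ℝ) : ℂ) / ((2 : ℝ) : ℂ) := by push_cast; ring
  have hpow : ((t : ℂ) / 2) ^ (2 * (n : ℂ) + (μ + ν + 1)) =
      ((t : ℂ) / 2) ^ (2 * (n : ℂ) + μ) * ((t : ℂ) ^ (ν + 1) / (2 ^ ν * 2)) := by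
    rw [show 2 * (n : ℂ) + (μ + ν + 1) = 2 * (n : ℂ) + μ + (ν + 1) by ring,
      cpow_add _ _ (div_ne_zero (ofReal_ne_zero.mpr ht.ne') two_ne_zero)]
    congr 1
    rw [htwo, div_cpow_ofReal_nonneg ht.le zero_le_two, ofReal_ofNat, cpow_add _ _ two_ne_zero,
      cpow_one]
  have hΓμ := Gamma_ne_zero_of_re_pos hμn
  have hΓν := Gamma_ne_zero_of_re_pos hν1
  have h2ν : (2 : ℂ) ^ ν ≠ 0 := cpow_ne_zero_iff.mpr (Or.inl two_ne_zero)
  simp only [besselJTerm, hbeta, hpow]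
  field_simp

theorem sonine_first_finite_integral (μ ν : ℂ) (hμ : -1 < μ.re) (hν : -1 < ν.re)
    (t : ℝ) (ht : 0 < t) :
    besselJ (μ + ν + 1) t =
      ((t : ℂ) ^ (ν + 1) / ((2 : ℂ) ^ ν * Complex.Gamma (ν + 1))) *
        ∫ s in (0 : ℝ)..1,
          besselJ μ (s * t) * (s : ℂ) ^ (μ + 1) * (((1 - s ^ 2 : ℝ) : ℂ)) ^ ν := by
  rw [intervalIntegral.integral_of_le zero_le_one, integral_Ioc_eq_integral_Ioo,
    ← (hasSum_integral_besselJ_mul μ ν hμ hν ht).tsum_eq, ← tsum_mul_left, besselJ_eq_tsum]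
  exact tsum_congr (besselJTerm_add_add_one μ ν hμ hν ht)
end

section
/- Let g ∈ L¹(ℝⁿ) be a function whose distribution function satisfies |{x : |g(x)| > t}| ≤ c/t^r for all t > 0, where 1 < r < ∞. Then the convolution operator f ↦ f * g is of weak type (1, r): there is a constant C such that for all f ∈ L¹(ℝⁿ) and all s > 0, |{x : |f*g(x)| > s}| ≤ C (‖f‖₁ / s)^r. -/
/-!
Split `g` at the height `M = s / (2‖f‖₁)`. The part of `g` where `|g| ≤ M` contributes at most
`M ‖f‖₁ = s / 2` to `|f * g|`, so `{|f * g| > s}` lies in `{|f| * |g| 𝟙_{|g| > M} ≥ s / 2}`; by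
Markov's inequality and Tonelli its measure is at most `(2 / s) ‖f‖₁ ∫_{|g| > M} |g|`. The layer
cake formula turns the weak-type bound on `g` into `∫_{|g| > M} |g| ≤ c r / (r - 1) M ^ (1 - r)`,
and substituting `M` gives `2 ^ r c r / (r - 1) (‖f‖₁ / s) ^ r`.
-/

open scoped ENNReal
open MeasureTheory Set

namespace MeasureTheory

theorem lintegral_Ioi_div_max_rpow {c M r : ℝ} (hc : 0 ≤ c) (hM : 0 < M) (hr : 1 < r) :
    ∫⁻ t in Ioi 0, ENNReal.ofReal (c / max t M ^ r) =
      ENNReal.ofReal (c * r / (r - 1) * M ^ (1 - r)) := by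
  have hr1 : 0 < r - 1 := by linarith
  have hnear : ∫⁻ t in Ioc 0 M, ENNReal.ofReal (c / max t M ^ r) =
      ENNReal.ofReal (c * M ^ (1 - r)) := by
    rw [setLIntegral_congr_fun measurableSet_Ioc fun t ht ↦ by rw [max_eq_right ht.2],
      setLIntegral_const, Real.volume_Ioc, sub_zero, ← ENNReal.ofReal_mul (by positivity),
      Real.rpow_sub hM, Real.rpow_one]
    ring_nf
  have hpow : ∀ t ∈ Ioi M, c / max t M ^ r = c * t ^ (-r) := fun t ht ↦ by
    rw [max_eq_left ht.le, Real.rpow_neg (hM.trans ht).le, div_eq_mul_inv]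
  have hint : IntegrableOn (fun t ↦ c * t ^ (-r)) (Ioi M) :=
    (integrableOn_Ioi_rpow_of_lt (by linarith) hM).const_mul c
  have hfar : ∫⁻ t in Ioi M, ENNReal.ofReal (c / max t M ^ r) =
      ENNReal.ofReal (c * M ^ (1 - r) / (r - 1)) := by
    rw [setLIntegral_congr_fun measurableSet_Ioi fun t ht ↦ by rw [hpow t ht],
      ← ofReal_integral_eq_lintegral_ofReal hint (ae_restrict_of_forall_mem measurableSet_Ioi
        fun t ht ↦ mul_nonneg hc (Real.rpow_nonneg (hM.trans ht).le _)),
      integral_const_mul, integral_Ioi_rpow_of_lt (by linarith) hM]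
    rw [show -r + 1 = -(r - 1) by ring, show 1 - r = -(r - 1) by ring]
    field_simp
  rw [← Ioc_union_Ioi_eq_Ioi hM.le, lintegral_union measurableSet_Ioi Ioc_disjoint_Ioi_same,
    hnear, hfar, ← ENNReal.ofReal_add (by positivity) (div_nonneg (by positivity) hr1.le)]
  congr 1
  field_simp
  ring

theorem setLIntegral_enorm_tail_le {α : Type*} [MeasurableSpace α] {μ : Measure α} {g : α → ℝ}
    (hg : Measurable g) {c r M : ℝ} (hc : 0 ≤ c) (hr : 1 < r) (hM : 0 < M)
    (hweak : ∀ t : ℝ, 0 < t → μ {x | t < |g x|} ≤ ENNReal.ofReal (c / t ^ r)) :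
    ∫⁻ x in {x | M < |g x|}, ‖g x‖ₑ ∂μ ≤ ENNReal.ofReal (c * r / (r - 1) * M ^ (1 - r)) := by
  simp_rw [Real.enorm_eq_ofReal_abs]
  rw [lintegral_eq_lintegral_meas_lt _ (ae_of_all _ fun x ↦ abs_nonneg _) hg.abs.aemeasurable,
    ← lintegral_Ioi_div_max_rpow hc hM hr]
  refine setLIntegral_mono' measurableSet_Ioi fun t _ ↦ ?_
  rw [Measure.restrict_apply (measurableSet_lt measurable_const hg.abs)]
  exact (measure_mono fun x (hx : _ ∧ _) ↦ (max_lt hx.1 hx.2 : max t M < |g x|)).trans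
    (hweak _ (lt_max_of_lt_right hM))

section AddGroup

variable {G : Type*} [MeasurableSpace G] [AddGroup G] [MeasurableAdd₂ G] [MeasurableNeg G]
  {μ : Measure G} [μ.IsAddLeftInvariant] [SFinite μ]

theorem lintegral_lconvolution {f g : G → ℝ≥0∞} (hf : AEMeasurable f μ)
    (hg : AEMeasurable g μ) :
    ∫⁻ x, (f ⋆ₗ[μ] g) x ∂μ = (∫⁻ x, f x ∂μ) * ∫⁻ x, g x ∂μ := by
  simp only [lconvolution_def]
  rw [lintegral_lintegral_swap (by fun_prop), ← lintegral_mul_const'' _ hf]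
  congr! 2 with y
  have hgy : AEMeasurable (fun x ↦ g (-y + x)) μ :=
    hg.comp_quasiMeasurePreserving (measurePreserving_add_left μ (-y)).quasiMeasurePreserving
  rw [lintegral_const_mul'' _ hgy, lintegral_add_left_eq_self]

theorem meas_ge_lconvolution_le {f g : G → ℝ≥0∞} (hf : AEMeasurable f μ)
    (hg : AEMeasurable g μ) {ε : ℝ≥0∞} (hε : ε ≠ 0) (hε' : ε ≠ ∞) :
    μ {x | ε ≤ (f ⋆ₗ[μ] g) x} ≤ (∫⁻ x, f x ∂μ) * (∫⁻ x, g x ∂μ) / ε := by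
  rw [← lintegral_lconvolution hf hg]
  exact meas_ge_le_lintegral_div (by fun_prop) hε hε'

end AddGroup

section AddCommGroup

variable {G : Type*} [MeasurableSpace G] [AddCommGroup G] {μ : Measure G}

theorem enorm_integral_sub_mul_le_lconvolution (f g : G → ℝ) (x : G) :
    ‖∫ y, f (x - y) * g y ∂μ‖ₑ ≤ ((fun y ↦ ‖g y‖ₑ) ⋆ₗ[μ] fun y ↦ ‖f y‖ₑ) x := by
  refine (enorm_integral_le_lintegral_enorm _).trans_eq (lintegral_congr fun y ↦ ?_)
  rw [enorm_mul, mul_comm, neg_add_eq_sub]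

variable [MeasurableAdd₂ G] [MeasurableNeg G] [μ.IsAddLeftInvariant] [μ.IsNegInvariant]
  [SFinite μ]

theorem lconvolution_le_mul_add {φ ψ F : G → ℝ≥0∞} (hψ : AEMeasurable ψ μ)
    (hF : AEMeasurable F μ) {M : ℝ≥0∞} (hφ : ∀ y, φ y ≤ M + ψ y) (x : G) :
    (φ ⋆ₗ[μ] F) x ≤ M * (∫⁻ y, F y ∂μ) + (ψ ⋆ₗ[μ] F) x := by
  simp only [lconvolution_def]
  calc ∫⁻ y, φ y * F (-y + x) ∂μ ≤ ∫⁻ y, M * F (-y + x) + ψ y * F (-y + x) ∂μ :=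
        lintegral_mono fun y ↦ by rw [← add_mul]; gcongr; exact hφ y
    _ = M * (∫⁻ y, F y ∂μ) + ∫⁻ y, ψ y * F (-y + x) ∂μ := by
        rw [lintegral_add_right' _ (by fun_prop), lintegral_const_mul'' _ (by fun_prop)]
        simp_rw [neg_add_eq_sub]
        rw [lintegral_sub_left_eq_self]

theorem meas_lt_abs_integral_sub_mul_le {f g : G → ℝ} (hf : AEMeasurable f μ)
    (hg : Measurable g) {s M : ℝ} (hs : 0 < s)
    (hM : ENNReal.ofReal M * ∫⁻ y, ‖f y‖ₑ ∂μ ≤ ENNReal.ofReal (s / 2)) :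
    μ {x | s < |∫ y, f (x - y) * g y ∂μ|} ≤
      (∫⁻ y in {y | M < |g y|}, ‖g y‖ₑ ∂μ) * (∫⁻ y, ‖f y‖ₑ ∂μ) / ENNReal.ofReal (s / 2) := by
  set S := {y | M < |g y|}
  have hS : MeasurableSet S := measurableSet_lt measurable_const hg.abs
  set ψ := S.indicator fun y ↦ ‖g y‖ₑ
  have hψ : AEMeasurable ψ μ := (hg.enorm.indicator hS).aemeasurable
  have hsplit : ∀ y, ‖g y‖ₑ ≤ ENNReal.ofReal M + ψ y := fun y ↦ by
    by_cases hy : y ∈ S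
    · simp only [ψ, indicator_of_mem hy, le_add_self]
    · rw [show ψ y = 0 from indicator_of_notMem hy _, add_zero, Real.enorm_eq_ofReal_abs]
      exact ENNReal.ofReal_le_ofReal (not_lt.mp hy)
  have hlevel : {x | s < |∫ y, f (x - y) * g y ∂μ|} ⊆
      {x | ENNReal.ofReal (s / 2) ≤ (ψ ⋆ₗ[μ] fun y ↦ ‖f y‖ₑ) x} := fun x hx ↦ by
    refine ENNReal.le_of_add_le_add_left (a := ENNReal.ofReal (s / 2)) ENNReal.ofReal_ne_top ?_
    calc ENNReal.ofReal (s / 2) + ENNReal.ofReal (s / 2) = ENNReal.ofReal s := by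
          rw [← ENNReal.ofReal_add (by positivity) (by positivity), add_halves]
      _ ≤ ‖∫ y, f (x - y) * g y ∂μ‖ₑ := by
          rw [Real.enorm_eq_ofReal_abs]
          exact ENNReal.ofReal_le_ofReal hx.le
      _ ≤ ((fun y ↦ ‖g y‖ₑ) ⋆ₗ[μ] fun y ↦ ‖f y‖ₑ) x :=
          enorm_integral_sub_mul_le_lconvolution f g x
      _ ≤ ENNReal.ofReal M * (∫⁻ y, ‖f y‖ₑ ∂μ) + (ψ ⋆ₗ[μ] fun y ↦ ‖f y‖ₑ) x :=
          lconvolution_le_mul_add hψ hf.enorm hsplit x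
      _ ≤ ENNReal.ofReal (s / 2) + (ψ ⋆ₗ[μ] fun y ↦ ‖f y‖ₑ) x := by gcongr
  rw [← lintegral_indicator hS]
  exact (measure_mono hlevel).trans
    (meas_ge_lconvolution_le hψ hf.enorm (by simpa using hs) ENNReal.ofReal_ne_top)

theorem meas_lt_abs_integral_sub_mul_le_rpow {f g : G → ℝ} (hf : Integrable f μ)
    (hg : Measurable g) {c r : ℝ} (hc : 0 ≤ c) (hr : 1 < r)
    (hweak : ∀ t : ℝ, 0 < t → μ {x | t < |g x|} ≤ ENNReal.ofReal (c / t ^ r)) {s : ℝ}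
    (hs : 0 < s) :
    μ {x | s < |∫ y, f (x - y) * g y ∂μ|} ≤
      ENNReal.ofReal (2 ^ r * (c * r / (r - 1)) * ((∫ y, |f y| ∂μ) / s) ^ r) := by
  have hfI : ENNReal.ofReal (∫ y, |f y| ∂μ) = ∫⁻ y, ‖f y‖ₑ ∂μ := by
    simpa only [Real.norm_eq_abs] using ofReal_integral_norm_eq_lintegral_enorm hf
  set I := ∫ y, |f y| ∂μ
  have hI0 : 0 ≤ I := integral_nonneg fun y ↦ abs_nonneg (f y)
  rcases hI0.eq_or_lt with hI | hI
  · -- the threshold `s / (2‖f‖₁)` degenerates, but then any threshold gives the bound `0`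
    rw [← hI, ENNReal.ofReal_zero] at hfI
    have hzero := meas_lt_abs_integral_sub_mul_le hf.aemeasurable hg (M := 1) hs
      (by rw [← hfI, mul_zero]; exact zero_le)
    rw [← hfI, mul_zero, ENNReal.zero_div] at hzero
    exact hzero.trans zero_le
  set u := 2 * (I / s) with hu_def
  have hu : 0 < u := by positivity
  have hM : u⁻¹ * I = s / 2 := by rw [hu_def]; field_simp
  have hur : u⁻¹ ^ (1 - r) * (I / (s / 2)) = 2 ^ r * (I / s) ^ r := by
    rw [Real.inv_rpow hu.le, ← Real.rpow_neg hu.le, neg_sub, Real.rpow_sub_one hu.ne',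
      show I / (s / 2) = u by rw [hu_def]; ring, div_mul_cancel₀ _ hu.ne', hu_def,
      Real.mul_rpow two_pos.le (by positivity)]
  calc μ {x | s < |∫ y, f (x - y) * g y ∂μ|}
      ≤ (∫⁻ y in {y | u⁻¹ < |g y|}, ‖g y‖ₑ ∂μ) * ENNReal.ofReal I / ENNReal.ofReal (s / 2) := by
        rw [hfI]
        refine meas_lt_abs_integral_sub_mul_le hf.aemeasurable hg hs ?_
        rw [← hfI, ← ENNReal.ofReal_mul (inv_pos.mpr hu).le, hM]
    _ ≤ ENNReal.ofReal (c * r / (r - 1) * u⁻¹ ^ (1 - r)) * ENNReal.ofReal I /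
          ENNReal.ofReal (s / 2) := by
        gcongr
        exact setLIntegral_enorm_tail_le hg hc hr (inv_pos.mpr hu) hweak
    _ = ENNReal.ofReal (2 ^ r * (c * r / (r - 1)) * (I / s) ^ r) := by
        rw [← ENNReal.ofReal_mul (by positivity), ← ENNReal.ofReal_div_of_pos (by positivity),
          mul_div_assoc, mul_assoc, hur]
        ring_nf

end AddCommGroup

end MeasureTheory

theorem convolution_weak_type_one_r_general (n : ℕ) (r : ℝ) (hr : 1 < r) (c : ℝ) (hc : 0 < c)
    (g : EuclideanSpace ℝ (Fin n) → ℝ) (hg : Measurable g)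
    (hweak : ∀ t : ℝ, 0 < t → volume {x | t < |g x|} ≤ ENNReal.ofReal (c / t ^ r)) :
    ∃ C > 0, ∀ f : EuclideanSpace ℝ (Fin n) → ℝ, Integrable f volume →
      ∀ s : ℝ, 0 < s →
        volume {x | s < |∫ y, f (x - y) * g y|} ≤
          ENNReal.ofReal (C * ((∫ y, |f y|) / s) ^ r) := by
  have hr1 : 0 < r - 1 := by linarith
  exact ⟨2 ^ r * (c * r / (r - 1)), by positivity, fun f hf s hs ↦
    meas_lt_abs_integral_sub_mul_le_rpow hf hg hc.le hr hweak hs⟩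

theorem convolution_weak_type_one_r (n : ℕ) (r : ℝ) (hr : 1 < r) (c : ℝ) (hc : 0 < c)
    (g : EuclideanSpace ℝ (Fin n) → ℝ) (hg : Measurable g) (hgint : Integrable g volume)
    (hweak : ∀ t : ℝ, 0 < t → volume {x | t < |g x|} ≤ ENNReal.ofReal (c / t ^ r)) :
    ∃ C > 0, ∀ f : EuclideanSpace ℝ (Fin n) → ℝ, Integrable f volume →
      ∀ s : ℝ, 0 < s →
        volume {x | s < |∫ y, f (x - y) * g y|} ≤
          ENNReal.ofReal (C * ((∫ y, |f y|) / s) ^ r) :=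
  convolution_weak_type_one_r_general n r hr c hc g hg hweak
end
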